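/- arXiv:2305.08668 — 4 statements merged into one kernel-verified Lean document; each statement's English description precedes it below -/
import Mathlib

section
/- For every ν ∈ (0,1] there exists a constant C(ν) > 0 such that: for all real numbers t₁ < t₂ with t₂ − t₁ > 1 and every C² nonnegative function α : [t₁,t₂] → ℝ with α''(t) ≥ α(t) on [t₁,t₂], one has ∫_{t₁}^{t₂} α(t)^ν dt ≤ C(ν) (α(t₁)^ν + α(t₂)^ν). -/
open Set Filter Topology Real

/-! The function `B t = α t₁ e^(t₁ - t) + α t₂ e^(t - t₂)` solves `B'' = B` and dominates `α` at
both endpoints because `α ≥ 0` there. At an interior negative minimum of `B - α` we would have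
`(B - α)'' ≤ B - α < 0`, which is impossible, so `α ≤ B` on `[t₁, t₂]`. As `x ↦ x ^ ν` is
subadditive for `ν ≤ 1`, this gives `α ^ ν ≤ α t₁ ^ ν e^(ν (t₁ - t)) + α t₂ ^ ν e^(ν (t - t₂))`,
and each exponential integrates to at most `1 / ν`, so `C(ν) = 1 / ν` works. -/

theorem IsLocalMin.deriv_deriv_nonneg {f : ℝ → ℝ} {x₀ : ℝ} (hmin : IsLocalMin f x₀)
    (hc : ContinuousAt f x₀) : 0 ≤ deriv (deriv f) x₀ := by
  by_contra! hneg
  have hmax : IsLocalMax f x₀ := isLocalMax_of_deriv_deriv_neg hneg hmin.deriv_eq_zero hc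
  have hconst : f =ᶠ[𝓝 x₀] fun _ ↦ f x₀ := by
    filter_upwards [hmin, hmax] with x h₁ h₂ using le_antisymm h₂ h₁
  have : deriv (deriv f) x₀ = 0 := by
    rw [hconst.deriv.deriv_eq]
    simp
  exact hneg.ne this

theorem nonneg_of_deriv_deriv_le_self {β : ℝ → ℝ} {a b : ℝ} (hβ : ContinuousOn β (Icc a b))
    (ha : 0 ≤ β a) (hb : 0 ≤ β b) (hβ'' : ∀ t ∈ Ioo a b, deriv (deriv β) t ≤ β t) :
    ∀ t ∈ Icc a b, 0 ≤ β t := by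
  intro t ht
  obtain ⟨m, hm, hmin⟩ := isCompact_Icc.exists_isMinOn ⟨t, ht⟩ hβ
  refine le_trans ?_ (hmin ht)
  by_contra! hneg
  have hm' : m ∈ Ioo a b :=
    ⟨hm.1.lt_of_ne (by rintro rfl; linarith), hm.2.lt_of_ne (by rintro rfl; linarith)⟩
  have := (hmin.isLocalMin (Icc_mem_nhds hm'.1 hm'.2)).deriv_deriv_nonneg
    (hβ.continuousAt (Icc_mem_nhds hm'.1 hm'.2))
  linarith [hβ'' m hm']

theorem le_of_deriv_deriv_sub_self_le {f g : ℝ → ℝ} {a b : ℝ} (hf : ContDiff ℝ 2 f)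
    (hg : ContDiff ℝ 2 g) (ha : f a ≤ g a) (hb : f b ≤ g b)
    (hfg : ∀ t ∈ Ioo a b, deriv (deriv g) t - g t ≤ deriv (deriv f) t - f t) :
    ∀ t ∈ Icc a b, f t ≤ g t := by
  have hf' : ContDiff ℝ 1 (deriv f) := hf.iterate_deriv' 1 1
  have hg' : ContDiff ℝ 1 (deriv g) := hg.iterate_deriv' 1 1
  have hderiv : deriv (g - f) = deriv g - deriv f := by
    funext t
    exact deriv_sub (hg.differentiable two_ne_zero t) (hf.differentiable two_ne_zero t)
  have hderiv₂ (t : ℝ) : deriv (deriv (g - f)) t = deriv (deriv g) t - deriv (deriv f) t := by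
    rw [hderiv]
    exact deriv_sub (hg'.differentiable one_ne_zero t) (hf'.differentiable one_ne_zero t)
  intro t ht
  have := nonneg_of_deriv_deriv_le_self (β := g - f) (hg.continuous.sub hf.continuous).continuousOn
    (sub_nonneg.2 ha) (sub_nonneg.2 hb)
    (fun s hs ↦ by rw [hderiv₂, Pi.sub_apply]; linarith [hfg s hs]) t ht
  exact sub_nonneg.1 this

theorem deriv_mul_exp_sub_add_mul_exp_sub (a b c d : ℝ) :
    deriv (fun t ↦ c * exp (a - t) + d * exp (t - b)) =
      fun t ↦ -c * exp (a - t) + d * exp (t - b) := by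
  funext t
  have h₁ : HasDerivAt (fun t ↦ exp (a - t)) (-exp (a - t)) t := by
    simpa using ((hasDerivAt_id t).const_sub a).exp
  have h₂ : HasDerivAt (fun t ↦ exp (t - b)) (exp (t - b)) t := by
    simpa using ((hasDerivAt_id t).sub_const b).exp
  exact ((h₁.const_mul c).add (h₂.const_mul d)).deriv.trans (by ring)

theorem deriv_deriv_mul_exp_sub_add_mul_exp_sub (a b c d : ℝ) :
    deriv (deriv fun t ↦ c * exp (a - t) + d * exp (t - b)) =
      fun t ↦ c * exp (a - t) + d * exp (t - b) := by
  simp only [deriv_mul_exp_sub_add_mul_exp_sub, neg_neg]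

theorem le_mul_exp_sub_add_mul_exp_sub_of_le_deriv_deriv {α : ℝ → ℝ} {t₁ t₂ : ℝ}
    (hα : ContDiff ℝ 2 α) (h₁ : 0 ≤ α t₁) (h₂ : 0 ≤ α t₂)
    (hα'' : ∀ t ∈ Icc t₁ t₂, α t ≤ deriv (deriv α) t) :
    ∀ t ∈ Icc t₁ t₂, α t ≤ α t₁ * exp (t₁ - t) + α t₂ * exp (t - t₂) := by
  refine le_of_deriv_deriv_sub_self_le hα (by fun_prop) ?_ ?_ ?_
  · simp only [sub_self, exp_zero, mul_one, le_add_iff_nonneg_right]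
    positivity
  · simp only [sub_self, exp_zero, mul_one, le_add_iff_nonneg_left]
    positivity
  · intro t ht
    rw [deriv_deriv_mul_exp_sub_add_mul_exp_sub, sub_self, sub_nonneg]
    exact hα'' t (Ioo_subset_Icc_self ht)

theorem rpow_le_of_le_mul_exp_add_mul_exp {x c d u v ν : ℝ} (hx : 0 ≤ x) (hc : 0 ≤ c)
    (hd : 0 ≤ d) (hν₀ : 0 ≤ ν) (hν₁ : ν ≤ 1) (h : x ≤ c * exp u + d * exp v) :
    x ^ ν ≤ c ^ ν * exp (ν * u) + d ^ ν * exp (ν * v) := by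
  calc x ^ ν ≤ (c * exp u + d * exp v) ^ ν := rpow_le_rpow hx h hν₀
    _ ≤ (c * exp u) ^ ν + (d * exp v) ^ ν :=
      rpow_add_le_add_rpow (by positivity) (by positivity) hν₀ hν₁
    _ = c ^ ν * exp (ν * u) + d ^ ν * exp (ν * v) := by
      rw [mul_rpow hc (exp_pos u).le, mul_rpow hd (exp_pos v).le, ← exp_mul, ← exp_mul,
        mul_comm u, mul_comm v]

theorem integral_exp_mul_sub_left_le {ν : ℝ} (hν : 0 < ν) (a b : ℝ) :
    ∫ t in a..b, exp (ν * (a - t)) ≤ 1 / ν := by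
  simp only [mul_sub, intervalIntegral.integral_comp_sub_mul _ hν.ne', integral_exp, sub_self,
    exp_zero, smul_eq_mul, mul_one, one_div, sub_le_self_iff]
  positivity

theorem integral_exp_mul_sub_right_le {ν : ℝ} (hν : 0 < ν) (a b : ℝ) :
    ∫ t in a..b, exp (ν * (t - b)) ≤ 1 / ν := by
  simp only [mul_sub, intervalIntegral.integral_comp_mul_sub _ hν.ne', integral_exp, sub_self,
    exp_zero, smul_eq_mul, mul_one, one_div, sub_le_self_iff]
  positivity

/-- For every `ν ∈ (0,1]` there is a constant `C(ν) > 0` such that any nonnegative `C²`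
function `α` on an interval `[t₁,t₂]` of length `> 1` with `α'' ≥ α` satisfies
`∫_{t₁}^{t₂} α^ν ≤ C(ν) (α(t₁)^ν + α(t₂)^ν)`. -/
theorem stmt1 (ν : ℝ) (hν : ν ∈ Ioc (0 : ℝ) 1) :
    ∃ C : ℝ, 0 < C ∧ ∀ t₁ t₂ : ℝ, 1 < t₂ - t₁ → ∀ α : ℝ → ℝ,
      ContDiff ℝ 2 α → (∀ t ∈ Icc t₁ t₂, 0 ≤ α t) →
      (∀ t ∈ Icc t₁ t₂, α t ≤ deriv (deriv α) t) →
      (∫ t in t₁..t₂, α t ^ ν) ≤ C * (α t₁ ^ ν + α t₂ ^ ν) := by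
  obtain ⟨hν₀, hν₁⟩ := hν
  refine ⟨1 / ν, by positivity, fun t₁ t₂ hL α hα hα₀ hα'' ↦ ?_⟩
  have h₁ : 0 ≤ α t₁ := hα₀ t₁ (left_mem_Icc.2 (by linarith))
  have h₂ : 0 ≤ α t₂ := hα₀ t₂ (right_mem_Icc.2 (by linarith))
  have hbound := le_mul_exp_sub_add_mul_exp_sub_of_le_deriv_deriv hα h₁ h₂ hα''
  calc ∫ t in t₁..t₂, α t ^ ν
      ≤ ∫ t in t₁..t₂, (α t₁ ^ ν * exp (ν * (t₁ - t)) + α t₂ ^ ν * exp (ν * (t - t₂))) := by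
        refine intervalIntegral.integral_mono_on (by linarith) ?_
          (Continuous.intervalIntegrable (by fun_prop) _ _) fun t ht ↦
          rpow_le_of_le_mul_exp_add_mul_exp (hα₀ t ht) h₁ h₂ hν₀.le hν₁ (hbound t ht)
        exact (hα.continuous.rpow_const fun _ ↦ Or.inr hν₀.le).intervalIntegrable _ _
    _ = α t₁ ^ ν * (∫ t in t₁..t₂, exp (ν * (t₁ - t))) +
          α t₂ ^ ν * ∫ t in t₁..t₂, exp (ν * (t - t₂)) := by
        rw [intervalIntegral.integral_add (Continuous.intervalIntegrable (by fun_prop) _ _)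
          (Continuous.intervalIntegrable (by fun_prop) _ _),
          intervalIntegral.integral_const_mul, intervalIntegral.integral_const_mul]
    _ ≤ α t₁ ^ ν * (1 / ν) + α t₂ ^ ν * (1 / ν) := by
        gcongr
        exacts [integral_exp_mul_sub_left_le hν₀ _ _, integral_exp_mul_sub_right_le hν₀ _ _]
    _ = 1 / ν * (α t₁ ^ ν + α t₂ ^ ν) := by ring
end

section
/- Let T > 0 and let Y : ℝ² → ℝ⁵ be smooth, 2π-periodic in θ, harmonic into de Sitter space and η-conformal on [−T,T] × ℝ, with M := sup_{[−T,T]×ℝ} |Y|_ξ and G := sup_{[−T,T]×ℝ} |∇Y|_ξ both finite. Define α(t) := ∫₀^{2π} |∂_θY(t,θ)|²_ξ dθ and β(t) := ∫₀^{2π} |∇Y(t,θ)|²_ξ dθ. Then for every t ∈ (−T,T), |β'(t) − 2α'(t)| ≤ 4 M G α(t). -/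
open Real Set MeasureTheory intervalIntegral Filter

noncomputable section

/-- ℝ⁵ with its euclidean norm. -/
abbrev E5 := EuclideanSpace ℝ (Fin 5)

/-- The Minkowski bilinear form `η` on ℝ⁵. -/
def etaM (x y : E5) : ℝ := x 0 * y 0 + x 1 * y 1 + x 2 * y 2 + x 3 * y 3 - x 4 * y 4

/-- Partial derivative in the first (`t`) variable. -/
def pT (Y : ℝ → ℝ → E5) : ℝ → ℝ → E5 := fun t θ => deriv (fun s => Y s θ) t

/-- Partial derivative in the second (`θ`) variable. -/
def pTh (Y : ℝ → ℝ → E5) : ℝ → ℝ → E5 := fun t θ => deriv (fun s => Y t s) θ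

/-- The flat Laplacian `ΔY = ∂²_{tt}Y + ∂²_{θθ}Y`. -/
def lapY (Y : ℝ → ℝ → E5) (t θ : ℝ) : E5 := pT (pT Y) t θ + pTh (pTh Y) t θ

/-- `|∇Y|²_η = η(∂_tY,∂_tY) + η(∂_θY,∂_θY)`. -/
def gradSqEta (Y : ℝ → ℝ → E5) (t θ : ℝ) : ℝ :=
  etaM (pT Y t θ) (pT Y t θ) + etaM (pTh Y t θ) (pTh Y t θ)

/-- `|∇Y|²_ξ = |∂_tY|²_ξ + |∂_θY|²_ξ` (euclidean). -/
def gradSqXi (Y : ℝ → ℝ → E5) (t θ : ℝ) : ℝ :=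
  ‖pT Y t θ‖ ^ 2 + ‖pTh Y t θ‖ ^ 2

/-- `Y` is `2π`-periodic in `θ`. -/
def Periodic2pi (Y : ℝ → ℝ → E5) : Prop := ∀ t θ : ℝ, Y t (θ + 2 * π) = Y t θ

/-- `Y` is harmonic into de Sitter space on `I × ℝ` : `ΔY = −|∇Y|²_η Y`. -/
def HarmonicDS (Y : ℝ → ℝ → E5) (I : Set ℝ) : Prop :=
  ∀ t ∈ I, ∀ θ : ℝ, lapY Y t θ = -(gradSqEta Y t θ) • Y t θ

/-- `Y` is `η`-conformal on `I × ℝ`. -/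
def ConformalEta (Y : ℝ → ℝ → E5) (I : Set ℝ) : Prop :=
  ∀ t ∈ I, ∀ θ : ℝ,
    etaM (pT Y t θ) (pT Y t θ) = etaM (pTh Y t θ) (pTh Y t θ) ∧
    etaM (pT Y t θ) (pTh Y t θ) = 0

/-- `α(t) = ∫₀^{2π} |∂_θY(t,θ)|²_ξ dθ`. -/
def alphaF (Y : ℝ → ℝ → E5) (t : ℝ) : ℝ := ∫ θ in (0:ℝ)..(2 * π), ‖pTh Y t θ‖ ^ 2

/-- `β(t) = ∫₀^{2π} |∇Y(t,θ)|²_ξ dθ`. -/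
def betaF (Y : ℝ → ℝ → E5) (t : ℝ) : ℝ := ∫ θ in (0:ℝ)..(2 * π), gradSqXi Y t θ

/-- The circle average `Y*(t) = (1/2π) ∫₀^{2π} Y(t,θ) dθ`. -/
def Ystar (Y : ℝ → ℝ → E5) (t : ℝ) : E5 := (2 * π)⁻¹ • ∫ θ in (0:ℝ)..(2 * π), Y t θ

/-- `γ(t) = ∫₀^{2π} (|∂_t(Y − Y*)(t,θ)|²_ξ + |∂_θY(t,θ)|²_ξ) dθ`. -/
def gammaF (Y : ℝ → ℝ → E5) (t : ℝ) : ℝ :=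
  ∫ θ in (0:ℝ)..(2 * π), (‖pT Y t θ - deriv (Ystar Y) t‖ ^ 2 + ‖pTh Y t θ‖ ^ 2)

/-- `δ(t) = ∫₀^{2π} (|∂²_{tθ}Y|²_ξ + |∂²_{θθ}Y|²_ξ) dθ`. -/
def deltaF (Y : ℝ → ℝ → E5) (t : ℝ) : ℝ :=
  ∫ θ in (0:ℝ)..(2 * π), (‖pT (pTh Y) t θ‖ ^ 2 + ‖pTh (pTh Y) t θ‖ ^ 2)

/-!
Differentiating under the integral sign, `β' - 2α' = ∫ 2⟪∂ₜY, ∂ₜₜY⟫ - 2⟪∂_θY, ∂ₜ∂_θY⟫`.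
Integrating the second term by parts in `θ` (periodicity kills the boundary terms) turns this into
`∫ 2⟪∂ₜY, ΔY⟫ = -2 ∫ |∇Y|²_η ⟪∂ₜY, Y⟫`. Conformality gives `|∇Y|²_η = 2 η(∂_θY, ∂_θY)`, which is
at most `2 |∂_θY|²_ξ` in absolute value, while `|⟪∂ₜY, Y⟫| ≤ G M`.
-/

open Function
open scoped InnerProductSpace

section Slices

variable {F : Type*} [NormedAddCommGroup F] [NormedSpace ℝ F] {g : ℝ × ℝ → F} {t θ : ℝ}

theorem DifferentiableAt.hasDerivAt_slice_fst (hg : DifferentiableAt ℝ g (t, θ)) :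
    HasDerivAt (fun s => g (s, θ)) (fderiv ℝ g (t, θ) (1, 0)) t :=
  hg.hasFDerivAt.comp_hasDerivAt t ((hasDerivAt_id t).prodMk (hasDerivAt_const t θ))

theorem DifferentiableAt.hasDerivAt_slice_snd (hg : DifferentiableAt ℝ g (t, θ)) :
    HasDerivAt (fun s => g (t, s)) (fderiv ℝ g (t, θ) (0, 1)) θ :=
  hg.hasFDerivAt.comp_hasDerivAt θ ((hasDerivAt_const θ t).prodMk (hasDerivAt_id θ))

end Slices

section PartialDerivatives

variable {Y : ℝ → ℝ → E5} {t θ : ℝ}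

theorem pT_eq_fderiv (hY : DifferentiableAt ℝ (uncurry Y) (t, θ)) :
    pT Y t θ = fderiv ℝ (uncurry Y) (t, θ) (1, 0) :=
  hY.hasDerivAt_slice_fst.deriv

theorem pTh_eq_fderiv (hY : DifferentiableAt ℝ (uncurry Y) (t, θ)) :
    pTh Y t θ = fderiv ℝ (uncurry Y) (t, θ) (0, 1) :=
  hY.hasDerivAt_slice_snd.deriv

theorem hasDerivAt_pT (hY : DifferentiableAt ℝ (uncurry Y) (t, θ)) :
    HasDerivAt (Y · θ) (pT Y t θ) t := by
  rw [pT_eq_fderiv hY]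
  exact hY.hasDerivAt_slice_fst

theorem hasDerivAt_pTh (hY : DifferentiableAt ℝ (uncurry Y) (t, θ)) :
    HasDerivAt (Y t ·) (pTh Y t θ) θ := by
  rw [pTh_eq_fderiv hY]
  exact hY.hasDerivAt_slice_snd

theorem uncurry_pT (hY : Differentiable ℝ (uncurry Y)) :
    uncurry (pT Y) = fun p => fderiv ℝ (uncurry Y) p (1, 0) :=
  funext fun _ => pT_eq_fderiv (hY _)

theorem uncurry_pTh (hY : Differentiable ℝ (uncurry Y)) :
    uncurry (pTh Y) = fun p => fderiv ℝ (uncurry Y) p (0, 1) :=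
  funext fun _ => pTh_eq_fderiv (hY _)

theorem contDiff_uncurry_pT (hY : ContDiff ℝ (⊤ : ℕ∞) (uncurry Y)) :
    ContDiff ℝ (⊤ : ℕ∞) (uncurry (pT Y)) := by
  rw [uncurry_pT (hY.differentiable (by simp))]
  exact (hY.fderiv_right (by simp)).clm_apply contDiff_const

theorem contDiff_uncurry_pTh (hY : ContDiff ℝ (⊤ : ℕ∞) (uncurry Y)) :
    ContDiff ℝ (⊤ : ℕ∞) (uncurry (pTh Y)) := by
  rw [uncurry_pTh (hY.differentiable (by simp))]
  exact (hY.fderiv_right (by simp)).clm_apply contDiff_const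

theorem pT_pTh_eq_pTh_pT (hY : ContDiff ℝ (⊤ : ℕ∞) (uncurry Y)) :
    pT (pTh Y) t θ = pTh (pT Y) t θ := by
  have hD : ContDiff ℝ (⊤ : ℕ∞) (fderiv ℝ (uncurry Y)) := hY.fderiv_right (by simp)
  have fderiv_apply_const (v w : ℝ × ℝ) :
      fderiv ℝ (fun p => fderiv ℝ (uncurry Y) p v) (t, θ) w =
        fderiv ℝ (fderiv ℝ (uncurry Y)) (t, θ) w v := by
    rw [fderiv_clm_apply (hD.differentiable (by simp) _) (differentiableAt_const v)]
    simp
  rw [pT_eq_fderiv ((contDiff_uncurry_pTh hY).differentiable (by simp) _),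
    pTh_eq_fderiv ((contDiff_uncurry_pT hY).differentiable (by simp) _),
    uncurry_pTh (hY.differentiable (by simp)), uncurry_pT (hY.differentiable (by simp)),
    fderiv_apply_const, fderiv_apply_const]
  exact hY.contDiffAt.isSymmSndFDerivAt
    (by simpa using WithTop.coe_le_coe.2 (le_top : (2 : ℕ∞) ≤ ⊤)) _ _

theorem Periodic2pi.pT (hper : Periodic2pi Y) : Periodic2pi (pT Y) := fun t θ => by
  simp only [_root_.pT, hper _ _]

theorem Periodic2pi.pTh (hper : Periodic2pi Y) : Periodic2pi (pTh Y) := fun t θ => by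
  simp only [_root_.pTh, ← deriv_comp_add_const, hper _ _]

theorem Periodic2pi.apply_two_pi (hper : Periodic2pi Y) (t : ℝ) : Y t (2 * π) = Y t 0 := by
  simpa using hper t 0

end PartialDerivatives

theorem hasDerivAt_intervalIntegral_of_continuous {F : Type*} [NormedAddCommGroup F]
    [NormedSpace ℝ F] [CompleteSpace F] {g g' : ℝ → ℝ → F} {a b : ℝ}
    (hg : Continuous (uncurry g)) (hg' : Continuous (uncurry g'))
    (hd : ∀ s θ, HasDerivAt (g · θ) (g' s θ) s) (t : ℝ) :
    HasDerivAt (fun s => ∫ θ in a..b, g s θ) (∫ θ in a..b, g' t θ) t := by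
  obtain ⟨C, hC⟩ :=
    (isCompact_closedBall t 1 |>.prod isCompact_uIcc).exists_bound_of_continuousOn hg'.continuousOn
  refine (intervalIntegral.hasDerivAt_integral_of_dominated_loc_of_deriv_le
    (bound := fun _ => C) (Metric.ball_mem_nhds t one_pos)
    (Eventually.of_forall fun s => (hg.uncurry_left s).aestronglyMeasurable)
    ((hg.uncurry_left t).intervalIntegrable _ _) (hg'.uncurry_left t).aestronglyMeasurable
    (ae_of_all _ fun θ hθ s hs =>
      hC (s, θ) ⟨Metric.ball_subset_closedBall hs, uIoc_subset_uIcc hθ⟩)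
    intervalIntegrable_const (ae_of_all _ fun θ _ s _ => hd s θ)).2

section Energies

variable {Y : ℝ → ℝ → E5}

theorem hasDerivAt_norm_sq_slice (hY : ContDiff ℝ (⊤ : ℕ∞) (uncurry Y)) (t θ : ℝ) :
    HasDerivAt (‖Y · θ‖ ^ 2) (2 * ⟪Y t θ, pT Y t θ⟫_ℝ) t :=
  (hasDerivAt_pT (hY.differentiable (by simp) _)).norm_sq

theorem continuous_uncurry_norm_sq (hY : ContDiff ℝ (⊤ : ℕ∞) (uncurry Y)) :
    Continuous (uncurry fun t θ => ‖Y t θ‖ ^ 2) :=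
  hY.continuous.norm.pow 2

theorem continuous_uncurry_two_mul_inner_pT (hY : ContDiff ℝ (⊤ : ℕ∞) (uncurry Y)) :
    Continuous (uncurry fun t θ => 2 * ⟪Y t θ, pT Y t θ⟫_ℝ) :=
  continuous_const.mul (hY.continuous.inner (contDiff_uncurry_pT hY).continuous)

theorem intervalIntegrable_inner_slice {f g : ℝ → ℝ → E5} (hf : Continuous (uncurry f))
    (hg : Continuous (uncurry g)) (t a b : ℝ) :
    IntervalIntegrable (fun θ => ⟪f t θ, g t θ⟫_ℝ) volume a b :=
  ((hf.uncurry_left t).inner (hg.uncurry_left t)).intervalIntegrable a b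

theorem hasDerivAt_alphaF (hY : ContDiff ℝ (⊤ : ℕ∞) (uncurry Y)) (t : ℝ) :
    HasDerivAt (alphaF Y) (∫ θ in (0:ℝ)..(2 * π), 2 * ⟪pTh Y t θ, pT (pTh Y) t θ⟫_ℝ) t := by
  have hY' := contDiff_uncurry_pTh hY
  exact hasDerivAt_intervalIntegral_of_continuous (continuous_uncurry_norm_sq hY')
    (continuous_uncurry_two_mul_inner_pT hY') (hasDerivAt_norm_sq_slice hY') t

theorem hasDerivAt_betaF (hY : ContDiff ℝ (⊤ : ℕ∞) (uncurry Y)) (t : ℝ) :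
    HasDerivAt (betaF Y) (∫ θ in (0:ℝ)..(2 * π),
      (2 * ⟪pT Y t θ, pT (pT Y) t θ⟫_ℝ + 2 * ⟪pTh Y t θ, pT (pTh Y) t θ⟫_ℝ)) t := by
  have hYt := contDiff_uncurry_pT hY
  have hYθ := contDiff_uncurry_pTh hY
  exact hasDerivAt_intervalIntegral_of_continuous (g := gradSqXi Y)
    (g' := fun s θ => 2 * ⟪pT Y s θ, pT (pT Y) s θ⟫_ℝ + 2 * ⟪pTh Y s θ, pT (pTh Y) s θ⟫_ℝ)
    ((continuous_uncurry_norm_sq hYt).add (continuous_uncurry_norm_sq hYθ))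
    ((continuous_uncurry_two_mul_inner_pT hYt).add (continuous_uncurry_two_mul_inner_pT hYθ))
    (fun s θ => (hasDerivAt_norm_sq_slice hYt s θ).add (hasDerivAt_norm_sq_slice hYθ s θ)) t

theorem integral_inner_pTh_pT_pTh (hY : ContDiff ℝ (⊤ : ℕ∞) (uncurry Y)) (hper : Periodic2pi Y)
    (t : ℝ) :
    ∫ θ in (0:ℝ)..(2 * π), ⟪pTh Y t θ, pT (pTh Y) t θ⟫_ℝ =
      -∫ θ in (0:ℝ)..(2 * π), ⟪pT Y t θ, pTh (pTh Y) t θ⟫_ℝ := by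
  have hYt := contDiff_uncurry_pT hY
  have hYθ := contDiff_uncurry_pTh hY
  have hderiv : ∀ θ ∈ uIcc 0 (2 * π), HasDerivAt (fun s => ⟪pT Y t s, pTh Y t s⟫_ℝ)
      (⟪pTh Y t θ, pT (pTh Y) t θ⟫_ℝ + ⟪pT Y t θ, pTh (pTh Y) t θ⟫_ℝ) θ := fun θ _ => by
    refine ((hasDerivAt_pTh (hYt.differentiable (by simp) _)).inner ℝ
      (hasDerivAt_pTh (hYθ.differentiable (by simp) _))).congr_deriv ?_
    rw [pT_pTh_eq_pTh_pT hY, real_inner_comm (pTh Y t θ), add_comm]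
  have hint₁ := intervalIntegrable_inner_slice hYθ.continuous
    (contDiff_uncurry_pT hYθ).continuous t 0 (2 * π)
  have hint₂ := intervalIntegrable_inner_slice hYt.continuous
    (contDiff_uncurry_pTh hYθ).continuous t 0 (2 * π)
  have hsum := intervalIntegral.integral_eq_sub_of_hasDerivAt hderiv (hint₁.add hint₂)
  rw [intervalIntegral.integral_add hint₁ hint₂, hper.pT.apply_two_pi, hper.pTh.apply_two_pi,
    sub_self] at hsum
  linarith

theorem deriv_betaF_sub_two_mul_deriv_alphaF (hY : ContDiff ℝ (⊤ : ℕ∞) (uncurry Y))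
    (hper : Periodic2pi Y) (t : ℝ) :
    deriv (betaF Y) t - 2 * deriv (alphaF Y) t =
      ∫ θ in (0:ℝ)..(2 * π), 2 * ⟪pT Y t θ, lapY Y t θ⟫_ℝ := by
  have hYt := contDiff_uncurry_pT hY
  have hYθ := contDiff_uncurry_pTh hY
  have hint {f g : ℝ → ℝ → E5} (hf : ContDiff ℝ (⊤ : ℕ∞) (uncurry f))
      (hg : ContDiff ℝ (⊤ : ℕ∞) (uncurry g)) :
      IntervalIntegrable (fun θ => 2 * ⟪f t θ, g t θ⟫_ℝ) volume 0 (2 * π) :=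
    (intervalIntegrable_inner_slice hf.continuous hg.continuous t 0 (2 * π)).const_mul 2
  simp only [lapY, inner_add_right, mul_add]
  rw [(hasDerivAt_betaF hY t).deriv, (hasDerivAt_alphaF hY t).deriv,
    intervalIntegral.integral_add (hint hYt (contDiff_uncurry_pT hYt))
      (hint hYθ (contDiff_uncurry_pT hYθ)),
    intervalIntegral.integral_add (hint hYt (contDiff_uncurry_pT hYt))
      (hint hYt (contDiff_uncurry_pTh hYθ))]
  simp only [intervalIntegral.integral_const_mul, integral_inner_pTh_pT_pTh hY hper]
  ring

end Energies

theorem abs_etaM_self_le (x : E5) : |etaM x x| ≤ ‖x‖ ^ 2 := by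
  rw [EuclideanSpace.real_norm_sq_eq, Fin.sum_univ_five, abs_le, etaM]
  constructor <;> nlinarith [sq_nonneg (x 0), sq_nonneg (x 1), sq_nonneg (x 2),
    sq_nonneg (x 3), sq_nonneg (x 4)]

section Pointwise

variable {Y : ℝ → ℝ → E5} {t θ M G : ℝ}

theorem abs_gradSqEta_le_of_conformal
    (hconf : etaM (pT Y t θ) (pT Y t θ) = etaM (pTh Y t θ) (pTh Y t θ)) :
    |gradSqEta Y t θ| ≤ 2 * ‖pTh Y t θ‖ ^ 2 := by
  rw [gradSqEta, hconf, ← two_mul, abs_mul, abs_two]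
  exact mul_le_mul_of_nonneg_left (abs_etaM_self_le _) zero_le_two

theorem norm_pT_le_sqrt_gradSqXi : ‖pT Y t θ‖ ≤ √(gradSqXi Y t θ) :=
  Real.le_sqrt_of_sq_le (le_add_of_nonneg_right (sq_nonneg _))

theorem abs_two_mul_inner_pT_lapY_le (hharm : lapY Y t θ = -(gradSqEta Y t θ) • Y t θ)
    (hconf : etaM (pT Y t θ) (pT Y t θ) = etaM (pTh Y t θ) (pTh Y t θ))
    (hM : ‖Y t θ‖ ≤ M) (hG : √(gradSqXi Y t θ) ≤ G) :
    |2 * ⟪pT Y t θ, lapY Y t θ⟫_ℝ| ≤ 4 * M * G * ‖pTh Y t θ‖ ^ 2 := by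
  have hinner : |⟪pT Y t θ, Y t θ⟫_ℝ| ≤ G * M :=
    (abs_real_inner_le_norm _ _).trans <| mul_le_mul (norm_pT_le_sqrt_gradSqXi.trans hG) hM
      (norm_nonneg _) ((Real.sqrt_nonneg _).trans hG)
  calc |2 * ⟪pT Y t θ, lapY Y t θ⟫_ℝ|
      = 2 * (|gradSqEta Y t θ| * |⟪pT Y t θ, Y t θ⟫_ℝ|) := by
        rw [hharm, real_inner_smul_right, abs_mul, abs_mul, abs_neg, abs_two]
    _ ≤ 2 * (2 * ‖pTh Y t θ‖ ^ 2 * (G * M)) := by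
        gcongr
        exact abs_gradSqEta_le_of_conformal hconf
    _ = 4 * M * G * ‖pTh Y t θ‖ ^ 2 := by ring

end Pointwise

theorem stmt4_general (T M G : ℝ) (Y : ℝ → ℝ → E5)
    (hsm : ContDiff ℝ (⊤ : ℕ∞) (Function.uncurry Y))
    (hper : Periodic2pi Y)
    (hharm : HarmonicDS Y (Icc (-T) T))
    (hconf : ConformalEta Y (Icc (-T) T))
    (hM : ∀ t ∈ Icc (-T) T, ∀ θ : ℝ, ‖Y t θ‖ ≤ M)
    (hG : ∀ t ∈ Icc (-T) T, ∀ θ : ℝ, Real.sqrt (gradSqXi Y t θ) ≤ G) :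
    ∀ t ∈ Ioo (-T) T,
      |deriv (betaF Y) t - 2 * deriv (alphaF Y) t| ≤ 4 * M * G * alphaF Y t := by
  intro t ht
  have htI : t ∈ Icc (-T) T := Ioo_subset_Icc_self ht
  rw [← Real.norm_eq_abs, deriv_betaF_sub_two_mul_deriv_alphaF hsm hper t, alphaF,
    ← intervalIntegral.integral_const_mul]
  refine intervalIntegral.norm_integral_le_of_norm_le two_pi_pos.le
    (ae_of_all _ fun θ _ => ?_) ?_
  · exact abs_two_mul_inner_pT_lapY_le (hharm t htI θ) (hconf t htI θ).1 (hM t htI θ)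
      (hG t htI θ)
  · exact (continuous_const.mul
      ((continuous_uncurry_norm_sq (contDiff_uncurry_pTh hsm)).uncurry_left t)).intervalIntegrable
      _ _

/-- For a conformal harmonic map into de Sitter space, bounded by `M` with gradient bounded
by `G`, one has `|β'(t) − 2α'(t)| ≤ 4 M G α(t)`. -/
theorem stmt4 (T M G : ℝ) (hT : 0 < T) (Y : ℝ → ℝ → E5)
    (hsm : ContDiff ℝ (⊤ : ℕ∞) (Function.uncurry Y))
    (hper : Periodic2pi Y)
    (hharm : HarmonicDS Y (Icc (-T) T))
    (hconf : ConformalEta Y (Icc (-T) T))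
    (hM : ∀ t ∈ Icc (-T) T, ∀ θ : ℝ, ‖Y t θ‖ ≤ M)
    (hG : ∀ t ∈ Icc (-T) T, ∀ θ : ℝ, Real.sqrt (gradSqXi Y t θ) ≤ G) :
    ∀ t ∈ Ioo (-T) T,
      |deriv (betaF Y) t - 2 * deriv (alphaF Y) t| ≤ 4 * M * G * alphaF Y t :=
  stmt4_general T M G Y hsm hper hharm hconf hM hG
end
end

section
/- Let μ > 0. There exists L > 4π such that for every ℓ ≥ L and every Lebesgue-integrable function α : [0,ℓ] → [0,∞) satisfying ∫_{2π}^{ℓ−2π} α(s) ds ≥ μ/2 and ∫_{[0,2π] ∪ [ℓ−2π,ℓ]} α(s) ds ≤ 10^{−1000} μ, one has ∫_1^{ℓ−1} α(s) [ (4π³/ℓ²) cos²(πs/ℓ) − sin²(πs/ℓ) ] ds < −π³ μ / (2ℓ²). -/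
/-!
Write `w(s) = K cos²(πs/ℓ) − sin²(πs/ℓ)` with `K = 4π³/ℓ²`. Everywhere `w ≤ K`, and on the
middle interval `[2π, ℓ − 2π]` Jordan's inequality gives `sin(πs/ℓ) ≥ 4π/ℓ`, hence
`w ≤ (4π³ − 16π²)/ℓ² < 0` there. Since `α ≥ 0`, the integral is at most `K` times the (tiny)
boundary mass plus `(4π³ − 16π²)/ℓ²` times the middle mass `≥ μ/2`, i.e. at most
`μ/ℓ² · (2π³ − 8π² + 8π³·10⁻¹⁰⁰⁰)`, and this beats `−π³μ/(2ℓ²)` because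
`(5/2 + 8·10⁻¹⁰⁰⁰) π < 8`.
Any `L ∈ (4π, ∞)` works; we take `L = 13`.
-/

open Real Set MeasureTheory intervalIntegral

theorem Real.two_div_pi_mul_le_sin_of_mem_Icc {a x : ℝ} (ha : 0 ≤ a) (hx : x ∈ Icc a (π - a)) :
    2 / π * a ≤ sin x := by
  have jordan : ∀ y ∈ Icc a (π / 2), 2 / π * a ≤ sin y := fun y hy =>
    (mul_le_mul_of_nonneg_left hy.1 (by positivity)).trans
      (mul_le_sin (ha.trans hy.1) hy.2)
  rcases le_or_gt x (π / 2) with hx2 | hx2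
  · exact jordan x ⟨hx.1, hx2⟩
  · rw [← sin_pi_sub]
    exact jordan (π - x) ⟨by linarith [hx.2], by linarith⟩

theorem Real.two_mul_div_le_sin_pi_mul_div {ℓ t s : ℝ} (hℓ : 0 < ℓ) (ht : 0 ≤ t)
    (hs : s ∈ Icc t (ℓ - t)) : 2 * t / ℓ ≤ sin (π * s / ℓ) := by
  have h := two_div_pi_mul_le_sin_of_mem_Icc (a := π * t / ℓ) (x := π * s / ℓ) (by positivity)
    ⟨by gcongr; exact hs.1, by
      rw [div_le_iff₀ hℓ, sub_mul, div_mul_cancel₀ _ hℓ.ne']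
      nlinarith [hs.2, pi_pos]⟩
  convert h using 1
  field_simp

theorem intervalIntegral_le_setIntegral_of_Icc_subset {α : ℝ → ℝ} {S : Set ℝ} {a b : ℝ}
    (hab : a ≤ b) (hS : MeasurableSet S) (hsub : Icc a b ⊆ S) (hα : IntegrableOn α S)
    (hα0 : ∀ s ∈ S, 0 ≤ α s) : ∫ s in a..b, α s ≤ ∫ s in S, α s := by
  rw [integral_of_le hab]
  exact setIntegral_mono_set hα (ae_restrict_of_forall_mem hS hα0)
    (Ioc_subset_Icc_self.trans hsub).eventuallyLE

theorem intervalIntegral_mul_le_const_mul {α w : ℝ → ℝ} {a b K : ℝ} (hab : a ≤ b)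
    (hα : IntervalIntegrable α volume a b)
    (hαw : IntervalIntegrable (fun s => α s * w s) volume a b)
    (hα0 : ∀ s ∈ Icc a b, 0 ≤ α s) (hw : ∀ s ∈ Icc a b, w s ≤ K) :
    ∫ s in a..b, α s * w s ≤ K * ∫ s in a..b, α s := by
  rw [← intervalIntegral.integral_const_mul]
  refine integral_mono_on hab hαw (hα.const_mul K) fun s hs => ?_
  rw [mul_comm K]
  exact mul_le_mul_of_nonneg_left (hw s hs) (hα0 s hs)

theorem intervalIntegral_mul_le_of_le_on_pieces {α w : ℝ → ℝ} {a b c d K M : ℝ}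
    (hab : a ≤ b) (hbc : b ≤ c) (hcd : c ≤ d) (hα : IntegrableOn α (Icc a d))
    (hw : ContinuousOn w (Icc a d)) (hα0 : ∀ s ∈ Icc a d, 0 ≤ α s)
    (hK : ∀ s ∈ Icc a d, w s ≤ K) (hM : ∀ s ∈ Icc b c, w s ≤ M) :
    ∫ s in a..d, α s * w s
      ≤ K * ((∫ s in a..b, α s) + ∫ s in c..d, α s) + M * ∫ s in b..c, α s := by
  have hαw : IntegrableOn (fun s => α s * w s) (Icc a d) := hα.mul_continuousOn hw isCompact_Icc
  have restrict : ∀ {f : ℝ → ℝ} {x y}, IntegrableOn f (Icc a d) → a ≤ x → x ≤ y → y ≤ d →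
      IntervalIntegrable f volume x y := fun hf hx hxy hy =>
    (intervalIntegrable_iff_integrableOn_Icc_of_le hxy).2 (hf.mono_set (Icc_subset_Icc hx hy))
  have piece : ∀ {x y L}, a ≤ x → x ≤ y → y ≤ d → (∀ s ∈ Icc x y, w s ≤ L) →
      ∫ s in x..y, α s * w s ≤ L * ∫ s in x..y, α s := fun hx hxy hy hL =>
    intervalIntegral_mul_le_const_mul hxy (restrict hα hx hxy hy) (restrict hαw hx hxy hy)
      (fun s hs => hα0 s (Icc_subset_Icc hx hy hs)) hL
  have hbd : b ≤ d := hbc.trans hcd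
  rw [← integral_add_adjacent_intervals (restrict hαw le_rfl hab hbd) (restrict hαw hab hbd le_rfl),
    ← integral_add_adjacent_intervals (restrict hαw hab hbc hcd)
      (restrict hαw (hab.trans hbc) hcd le_rfl)]
  have left := piece le_rfl hab hbd fun s hs => hK s (Icc_subset_Icc le_rfl hbd hs)
  have middle := piece hab hbc hcd hM
  have right := piece (hab.trans hbc) hcd le_rfl fun s hs =>
    hK s (Icc_subset_Icc (hab.trans hbc) le_rfl hs)
  linarith

theorem mul_cos_sq_sub_sin_sq_le {K ℓ t s : ℝ} (hK : 0 ≤ K) (hℓ : 0 < ℓ) (ht : 0 ≤ t)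
    (hs : s ∈ Icc t (ℓ - t)) :
    K * cos (π * s / ℓ) ^ 2 - sin (π * s / ℓ) ^ 2 ≤ K - (2 * t / ℓ) ^ 2 := by
  have hsin := two_mul_div_le_sin_pi_mul_div hℓ ht hs
  nlinarith [pow_le_pow_left₀ (by positivity) hsin 2,
    mul_le_mul_of_nonneg_left (cos_sq_le_one (π * s / ℓ)) hK]

theorem pi_mul_five_halves_add_lt_eight : π * (5 / 2 + 8 / 10 ^ 1000) < 8 := by
  have h : (8 : ℝ) / 10 ^ 1000 ≤ 1 / 1000 := by
    have : (10 : ℝ) ^ 4 ≤ 10 ^ 1000 := pow_le_pow_right₀ (by norm_num) (by norm_num)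
    calc (8 : ℝ) / 10 ^ 1000 ≤ 8 / 10 ^ 4 := by gcongr
      _ ≤ 1 / 1000 := by norm_num
  have hπ := pi_lt_d2
  generalize (8 : ℝ) / 10 ^ 1000 = ε at h ⊢
  nlinarith [pi_pos]

theorem weighted_masses_lt {ℓ μ N x y z : ℝ} (hℓ : 0 < ℓ) (hμ : 0 < μ) (hN : 0 < N)
    (hπN : π * (5 / 2 + 8 / N) < 8) (hx : x ≤ μ / N) (hy : y ≤ μ / N) (hz : μ / 2 ≤ z) :
    4 * π ^ 3 / ℓ ^ 2 * (x + y) + (4 * π ^ 3 / ℓ ^ 2 - (2 * (2 * π) / ℓ) ^ 2) * z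
      < -(π ^ 3 * μ) / (2 * ℓ ^ 2) := by
  have hM : 4 * π ^ 3 / ℓ ^ 2 - (2 * (2 * π) / ℓ) ^ 2 ≤ 0 := by
    rw [div_pow, ← sub_div]
    exact div_nonpos_of_nonpos_of_nonneg (by nlinarith [pi_pos, pi_lt_d2]) (by positivity)
  have hneg : μ * π ^ 2 * (π * (5 / 2 + 8 / N) - 8) / ℓ ^ 2 < 0 :=
    div_neg_of_neg_of_pos (mul_neg_of_pos_of_neg (by positivity) (sub_neg.2 hπN)) (by positivity)
  calc _ ≤ 4 * π ^ 3 / ℓ ^ 2 * (2 * (μ / N))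
        + (4 * π ^ 3 / ℓ ^ 2 - (2 * (2 * π) / ℓ) ^ 2) * (μ / 2) :=
        add_le_add (mul_le_mul_of_nonneg_left (two_mul (μ / N) ▸ add_le_add hx hy)
          (by positivity)) (mul_le_mul_of_nonpos_left hz hM)
    _ = μ * π ^ 2 * (π * (5 / 2 + 8 / N) - 8) / ℓ ^ 2 - π ^ 3 * μ / (2 * ℓ ^ 2) := by
        field_simp
        ring
    _ < -(π ^ 3 * μ) / (2 * ℓ ^ 2) := by
        rw [neg_div]
        linarith

/-- For `μ > 0` there is `L > 4π` such that for every `ℓ ≥ L` and every integrable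
`α : [0,ℓ] → [0,∞)` carrying at least `μ/2` of mass on `[2π, ℓ−2π]` and at most
`10⁻¹⁰⁰⁰ μ` of mass near the two boundary pieces, one has
`∫₁^{ℓ−1} α(s) [(4π³/ℓ²) cos²(πs/ℓ) − sin²(πs/ℓ)] ds < −π³μ/(2ℓ²)`. -/
theorem stmt11 (μ : ℝ) (hμ : 0 < μ) :
    ∃ L : ℝ, 4 * π < L ∧ ∀ ℓ : ℝ, L ≤ ℓ → ∀ α : ℝ → ℝ,
      IntegrableOn α (Icc 0 ℓ) →
      (∀ s ∈ Icc 0 ℓ, 0 ≤ α s) →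
      μ / 2 ≤ (∫ s in (2 * π)..(ℓ - 2 * π), α s) →
      (∫ s in Icc (0:ℝ) (2 * π) ∪ Icc (ℓ - 2 * π) ℓ, α s) ≤ μ / 10 ^ 1000 →
      (∫ s in (1:ℝ)..(ℓ - 1),
          α s * ((4 * π ^ 3 / ℓ ^ 2) * Real.cos (π * s / ℓ) ^ 2
            - Real.sin (π * s / ℓ) ^ 2))
        < -(π ^ 3 * μ) / (2 * ℓ ^ 2) := by
  refine ⟨13, by linarith [pi_lt_d2], ?_⟩
  intro ℓ hℓ α hα hα0 hmiddle hboundary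
  have hπ3 := pi_gt_three
  have hπ4 := pi_lt_d2
  have hℓ0 : 0 < ℓ := by linarith
  have hK : 0 ≤ 4 * π ^ 3 / ℓ ^ 2 := by positivity
  have hsub : Icc 1 (ℓ - 1) ⊆ Icc 0 ℓ := Icc_subset_Icc zero_le_one (by linarith)
  have hbound := intervalIntegral_mul_le_of_le_on_pieces (b := 2 * π) (c := ℓ - 2 * π)
    (by linarith) (by linarith) (by linarith) (hα.mono_set hsub) (by fun_prop)
    (fun s hs => hα0 s (hsub hs))
    (fun s _ => (sub_le_self _ (sq_nonneg _)).trans (mul_le_of_le_one_right hK (cos_sq_le_one _)))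
    (fun s hs => mul_cos_sq_sub_sin_sq_le hK hℓ0 two_pi_pos.le hs)
  have hSsub : Icc (0:ℝ) (2 * π) ∪ Icc (ℓ - 2 * π) ℓ ⊆ Icc 0 ℓ :=
    union_subset (Icc_subset_Icc le_rfl (by linarith)) (Icc_subset_Icc (by linarith) le_rfl)
  have hmass : ∀ {a b}, a ≤ b → Icc a b ⊆ Icc (0:ℝ) (2 * π) ∪ Icc (ℓ - 2 * π) ℓ →
      ∫ s in a..b, α s ≤ μ / 10 ^ 1000 := fun hab habS =>
    (intervalIntegral_le_setIntegral_of_Icc_subset hab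
      (measurableSet_Icc.union measurableSet_Icc) habS (hα.mono_set hSsub)
      (fun s hs => hα0 s (hSsub hs))).trans hboundary
  have hleft := hmass (a := 1) (by linarith) (subset_union_of_subset_left
    (Icc_subset_Icc zero_le_one le_rfl) _)
  have hright := hmass (b := ℓ - 1) (by linarith) (subset_union_of_subset_right
    (Icc_subset_Icc le_rfl (by linarith)) _)
  exact hbound.trans_lt (weighted_masses_lt hℓ0 hμ (by positivity) pi_mul_five_halves_add_lt_eight
    hleft hright hmiddle)
end

section
/- Let U ⊂ ℝ² be a bounded open set and K ⊂ U a compact set. Let Y : ℝ × ℝ² → ℝ⁵ be smooth, write Y_u := Y(u,·), and assume: η(Y_u(x), Y_u(x)) = 1 for all (u,x); Y_u(x) = Y_0(x) for all u ∈ ℝ and all x ∉ K; and Y_0 is harmonic into de Sitter space on U, i.e. ΔY_0 = −|∇Y_0|²_η Y_0 on U. Let V := ∂_uY(0,·) and define D(u) := ½ ∫_U ( η(∂_tY_u, ∂_tY_u) + η(∂_θY_u, ∂_θY_u) ) dx. Then D is twice differentiable at u = 0 and D''(0) = ∫_U ( η(∂_tV, ∂_tV) + η(∂_θV, ∂_θV)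 − η(V,V) |∇Y_0|²_η ) dx. -/
open Set MeasureTheory

noncomputable section

/-- Partial derivative in the first (`t`) variable of a map on ℝ². -/
def pT2 (f : ℝ × ℝ → E5) (x : ℝ × ℝ) : E5 := deriv (fun s => f (s, x.2)) x.1

/-- Partial derivative in the second (`θ`) variable of a map on ℝ². -/
def pTh2 (f : ℝ × ℝ → E5) (x : ℝ × ℝ) : E5 := deriv (fun s => f (x.1, s)) x.2

/-- The flat Laplacian `Δf = ∂²_{tt}f + ∂²_{θθ}f`. -/
def lap2 (f : ℝ × ℝ → E5) (x : ℝ × ℝ) : E5 := pT2 (pT2 f) x + pTh2 (pTh2 f) x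

/-- `|∇f|²_η = η(∂_tf,∂_tf) + η(∂_θf,∂_θf)`. -/
def gradSqEta2 (f : ℝ × ℝ → E5) (x : ℝ × ℝ) : ℝ :=
  etaM (pT2 f x) (pT2 f x) + etaM (pTh2 f x) (pTh2 f x)

/-!
Differentiating under the integral sign twice (legitimate because every `u`-derivative of the
integrand vanishes off the compact set `K`) gives `D'(u) = ∫_U ⟨∇∂_uY_u, ∇Y_u⟩_η` and
`D''(0) = ∫_U (|∇V|²_η + ⟨∇W, ∇Y_0⟩_η)` with `W = ∂²_uY(0,·)`; the mixed partial derivatives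
commute by Schwarz's theorem. As `W` vanishes off `K ⊆ U`, integration by parts turns
`∫_U ⟨∇W, ∇Y_0⟩_η` into `-∫_U η(W, ΔY_0) = ∫_U |∇Y_0|²_η η(W, Y_0)` by harmonicity, and
differentiating `η(Y_u, Y_u) = 1` twice gives `η(W, Y_0) = -η(V, V)`.
-/

open Function Filter

section Minkowski

theorem etaM_comm (x y : E5) : etaM x y = etaM y x := by
  unfold etaM; ring

theorem etaM_add_right (x y z : E5) : etaM x (y + z) = etaM x y + etaM x z := by
  simp only [etaM, PiLp.add_apply]; ring

theorem etaM_smul_right (x : E5) (c : ℝ) (y : E5) : etaM x (c • y) = c * etaM x y := by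
  simp only [etaM, PiLp.smul_apply, smul_eq_mul]; ring

def etaCLM : E5 →L[ℝ] E5 →L[ℝ] ℝ :=
  (EuclideanSpace.proj 0).smulRight (EuclideanSpace.proj (0 : Fin 5))
    + (EuclideanSpace.proj 1).smulRight (EuclideanSpace.proj (1 : Fin 5))
    + (EuclideanSpace.proj 2).smulRight (EuclideanSpace.proj (2 : Fin 5))
    + (EuclideanSpace.proj 3).smulRight (EuclideanSpace.proj (3 : Fin 5))
    - (EuclideanSpace.proj 4).smulRight (EuclideanSpace.proj (4 : Fin 5))

@[simp]
theorem etaCLM_apply (x y : E5) : etaCLM x y = etaM x y := by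
  simp [etaCLM, etaM]

theorem Continuous.etaM {α : Type*} [TopologicalSpace α] {f g : α → E5}
    (hf : Continuous f) (hg : Continuous g) : Continuous fun a => etaM (f a) (g a) := by
  simpa using (etaCLM.continuous.comp hf).clm_apply hg

theorem HasDerivAt.etaM {f g : ℝ → E5} {f' g' : E5} {t : ℝ}
    (hf : HasDerivAt f f' t) (hg : HasDerivAt g g' t) :
    HasDerivAt (fun s => _root_.etaM (f s) (g s))
      (_root_.etaM f' (g t) + _root_.etaM (f t) g') t := by
  simpa using (etaCLM.hasFDerivAt.comp_hasDerivAt t hf).clm_apply hg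

end Minkowski

section TimeDerivative

variable {X Z : Type*} [NormedAddCommGroup Z] [NormedSpace ℝ Z]

def uDeriv (Y : ℝ → X → Z) (u : ℝ) (x : X) : Z := deriv (fun s => Y s x) u

variable {Y : ℝ → X → Z} {m n : WithTop ℕ∞}

theorem uDeriv_eq_zero {u : ℝ} {x : X} {c : Z} (h : ∀ s, Y s x = c) : uDeriv Y u x = 0 := by
  simp only [uDeriv, h, deriv_const]

variable [NormedAddCommGroup X] [NormedSpace ℝ X]

theorem hasDerivAt_uDeriv (hY : Differentiable ℝ (uncurry Y)) (u : ℝ) (x : X) :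
    HasDerivAt (fun s => Y s x) (uDeriv Y u x) u :=
  ((hY.comp (differentiable_id.prodMk (differentiable_const x))) u).hasDerivAt

theorem Differentiable.of_uncurry (hY : Differentiable ℝ (uncurry Y)) (u : ℝ) :
    Differentiable ℝ (Y u) :=
  hY.comp ((differentiable_const u).prodMk differentiable_id)

theorem ContDiff.of_uncurry (hY : ContDiff ℝ n (uncurry Y)) (u : ℝ) : ContDiff ℝ n (Y u) :=
  hY.comp (contDiff_prodMk_right u)

theorem uDeriv_eq_fderiv (hY : Differentiable ℝ (uncurry Y)) (u : ℝ) (x : X) :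
    uDeriv Y u x = fderiv ℝ (uncurry Y) (u, x) (1, 0) :=
  ((hY (u, x)).hasFDerivAt.comp_hasDerivAt (f := fun s => (s, x)) u
    ((hasDerivAt_id' u).prodMk (hasDerivAt_const u x))).deriv

theorem fderiv_apply_eq_fderiv_uncurry (hY : Differentiable ℝ (uncurry Y)) (u : ℝ) (x w : X) :
    fderiv ℝ (Y u) x w = fderiv ℝ (uncurry Y) (u, x) (0, w) := by
  have h := (hY (u, x)).hasFDerivAt.comp x (hasFDerivAt_prodMk_right u x)
  rw [show Y u = uncurry Y ∘ fun y => (u, y) from rfl, h.fderiv]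
  rfl

theorem ContDiff.uncurry_uDeriv (hY : ContDiff ℝ n (uncurry Y)) (hmn : m + 1 ≤ n) :
    ContDiff ℝ m (uncurry (uDeriv Y)) := by
  have hYd : Differentiable ℝ (uncurry Y) :=
    hY.differentiable (ne_bot_of_le_ne_bot one_ne_zero (le_add_self.trans hmn))
  rw [show uncurry (uDeriv Y) = fun p => fderiv ℝ (uncurry Y) p (1, 0) from
    funext fun p => uDeriv_eq_fderiv hYd p.1 p.2]
  exact (hY.fderiv_right hmn).clm_apply contDiff_const

theorem ContDiff.uncurry_fderiv_apply (hY : ContDiff ℝ n (uncurry Y)) (hmn : m + 1 ≤ n) (w : X) :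
    ContDiff ℝ m (uncurry fun s y => fderiv ℝ (Y s) y w) := by
  have hYd : Differentiable ℝ (uncurry Y) :=
    hY.differentiable (ne_bot_of_le_ne_bot one_ne_zero (le_add_self.trans hmn))
  rw [show (uncurry fun s y => fderiv ℝ (Y s) y w) = fun p => fderiv ℝ (uncurry Y) p (0, w) from
    funext fun p => fderiv_apply_eq_fderiv_uncurry hYd p.1 p.2 w]
  exact (hY.fderiv_right hmn).clm_apply contDiff_const

theorem fderiv_uDeriv_apply (hY : ContDiff ℝ 2 (uncurry Y)) (u : ℝ) (x w : X) :
    fderiv ℝ (uDeriv Y u) x w = uDeriv (fun s y => fderiv ℝ (Y s) y w) u x := by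
  set F := uncurry Y
  have hFd : Differentiable ℝ F := hY.differentiable two_ne_zero
  have hF'd : Differentiable ℝ (fderiv ℝ F) :=
    (hY.fderiv_right (m := 1) le_rfl).differentiable one_ne_zero
  have hV : ContDiff ℝ 1 (uncurry (uDeriv Y)) := hY.uncurry_uDeriv le_rfl
  have hT : ContDiff ℝ 1 (uncurry fun s y => fderiv ℝ (Y s) y w) :=
    hY.uncurry_fderiv_apply le_rfl w
  have hdir : ∀ v z : ℝ × X, fderiv ℝ (fun p => fderiv ℝ F p v) (u, x) z =
      fderiv ℝ (fderiv ℝ F) (u, x) z v := fun v z => by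
    rw [fderiv_clm_apply (hF'd _) (differentiableAt_const v)]
    simp
  rw [fderiv_apply_eq_fderiv_uncurry (hV.differentiable one_ne_zero),
    uDeriv_eq_fderiv (hT.differentiable one_ne_zero),
    show uncurry (uDeriv Y) = fun p => fderiv ℝ F p (1, 0) from
      funext fun p => uDeriv_eq_fderiv hFd p.1 p.2,
    show (uncurry fun s y => fderiv ℝ (Y s) y w) = fun p => fderiv ℝ F p (0, w) from
      funext fun p => fderiv_apply_eq_fderiv_uncurry hFd p.1 p.2 w,
    hdir, hdir]
  exact hY.contDiffAt.isSymmSndFDerivAt (by simp) _ _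

theorem hasDerivAt_fderiv_apply (hY : ContDiff ℝ 2 (uncurry Y)) (u : ℝ) (x w : X) :
    HasDerivAt (fun s => fderiv ℝ (Y s) x w) (fderiv ℝ (uDeriv Y u) x w) u := by
  rw [fderiv_uDeriv_apply hY]
  exact hasDerivAt_uDeriv ((hY.uncurry_fderiv_apply le_rfl w).differentiable one_ne_zero) u x

theorem etaM_uDeriv_uDeriv_self {Y : ℝ → X → E5} (hY : ContDiff ℝ 2 (uncurry Y))
    (hsph : ∀ u x, etaM (Y u x) (Y u x) = 1) (u : ℝ) (x : X) :
    etaM (uDeriv (uDeriv Y) u x) (Y u x) = -etaM (uDeriv Y u x) (uDeriv Y u x) := by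
  have hYd := hY.differentiable two_ne_zero
  have hVd := (hY.uncurry_uDeriv (m := 1) le_rfl).differentiable one_ne_zero
  have hVY : ∀ s, etaM (uDeriv Y s x) (Y s x) = 0 := fun s => by
    have h := ((hasDerivAt_uDeriv hYd s x).etaM (hasDerivAt_uDeriv hYd s x)).deriv
    simp only [hsph, deriv_const, etaM_comm (Y s x)] at h
    linarith
  have h := ((hasDerivAt_uDeriv hVd u x).etaM (hasDerivAt_uDeriv hYd u x)).deriv
  simp only [hVY, deriv_const] at h
  linarith

end TimeDerivative

section Dirichlet

def dirichletForm (f h : ℝ × ℝ → E5) (x : ℝ × ℝ) : ℝ :=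
  etaM (pT2 f x) (pT2 h x) + etaM (pTh2 f x) (pTh2 h x)

theorem dirichletForm_comm (f h : ℝ × ℝ → E5) : dirichletForm f h = dirichletForm h f :=
  funext fun x => by simp only [dirichletForm, etaM_comm (pT2 f x), etaM_comm (pTh2 f x)]

variable {f h : ℝ × ℝ → E5} {x : ℝ × ℝ} {K : Set (ℝ × ℝ)}

theorem pT2_eq_fderiv (hf : DifferentiableAt ℝ f x) : pT2 f x = fderiv ℝ f x (1, 0) :=
  (hf.hasFDerivAt.comp_hasDerivAt (f := fun s => (s, x.2)) x.1
    ((hasDerivAt_id' x.1).prodMk (hasDerivAt_const x.1 x.2))).deriv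

theorem pTh2_eq_fderiv (hf : DifferentiableAt ℝ f x) : pTh2 f x = fderiv ℝ f x (0, 1) :=
  (hf.hasFDerivAt.comp_hasDerivAt (f := fun s => (x.1, s)) x.2
    ((hasDerivAt_const x.2 x.1).prodMk (hasDerivAt_id' x.2))).deriv

theorem ContDiff.continuous_pT2 (hf : ContDiff ℝ 1 f) : Continuous (pT2 f) := by
  rw [show pT2 f = fun x => fderiv ℝ f x (1, 0) from
    funext fun x => pT2_eq_fderiv (hf.differentiable one_ne_zero x)]
  exact (hf.continuous_fderiv one_ne_zero).clm_apply continuous_const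

theorem ContDiff.continuous_pTh2 (hf : ContDiff ℝ 1 f) : Continuous (pTh2 f) := by
  rw [show pTh2 f = fun x => fderiv ℝ f x (0, 1) from
    funext fun x => pTh2_eq_fderiv (hf.differentiable one_ne_zero x)]
  exact (hf.continuous_fderiv one_ne_zero).clm_apply continuous_const

theorem ContDiff.continuous_dirichletForm (hf : ContDiff ℝ 1 f) (hh : ContDiff ℝ 1 h) :
    Continuous (dirichletForm f h) :=
  (hf.continuous_pT2.etaM hh.continuous_pT2).add (hf.continuous_pTh2.etaM hh.continuous_pTh2)

theorem fderiv_eq_zero_of_notMem (hK : IsClosed K) (hfK : ∀ y ∉ K, f y = 0) (hx : x ∉ K) :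
    fderiv ℝ f x = 0 :=
  fderiv_of_notMem_tsupport ℝ fun hmem => hx (closure_minimal (support_subset_iff'.2 hfK) hK hmem)

theorem dirichletForm_eq_zero_of_notMem (hK : IsClosed K) (hf : Differentiable ℝ f)
    (hfK : ∀ y ∉ K, f y = 0) (hx : x ∉ K) : dirichletForm f h x = 0 := by
  simp [dirichletForm, pT2_eq_fderiv (hf x), pTh2_eq_fderiv (hf x),
    fderiv_eq_zero_of_notMem hK hfK hx, etaM]

variable {Y Z : ℝ → ℝ × ℝ → E5}

theorem continuous_uncurry_pT2 (hY : ContDiff ℝ 1 (uncurry Y)) :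
    Continuous (uncurry fun s => pT2 (Y s)) := by
  have hd := hY.differentiable one_ne_zero
  rw [show (uncurry fun s => pT2 (Y s)) = uncurry fun s y => fderiv ℝ (Y s) y (1, 0) from
    funext fun p => pT2_eq_fderiv (hd.of_uncurry p.1 p.2)]
  exact (hY.uncurry_fderiv_apply (m := 0) le_rfl _).continuous

theorem continuous_uncurry_pTh2 (hY : ContDiff ℝ 1 (uncurry Y)) :
    Continuous (uncurry fun s => pTh2 (Y s)) := by
  have hd := hY.differentiable one_ne_zero
  rw [show (uncurry fun s => pTh2 (Y s)) = uncurry fun s y => fderiv ℝ (Y s) y (0, 1) from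
    funext fun p => pTh2_eq_fderiv (hd.of_uncurry p.1 p.2)]
  exact (hY.uncurry_fderiv_apply (m := 0) le_rfl _).continuous

theorem continuous_uncurry_dirichletForm (hY : ContDiff ℝ 1 (uncurry Y))
    (hZ : ContDiff ℝ 1 (uncurry Z)) : Continuous (uncurry fun s => dirichletForm (Y s) (Z s)) :=
  ((continuous_uncurry_pT2 hY).etaM (continuous_uncurry_pT2 hZ)).add
    ((continuous_uncurry_pTh2 hY).etaM (continuous_uncurry_pTh2 hZ))

theorem hasDerivAt_pT2 (hY : ContDiff ℝ 2 (uncurry Y)) (u : ℝ) (x : ℝ × ℝ) :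
    HasDerivAt (fun s => pT2 (Y s) x) (pT2 (uDeriv Y u) x) u := by
  have hd := hY.differentiable two_ne_zero
  have hVd := (hY.uncurry_uDeriv (m := 1) le_rfl).differentiable one_ne_zero
  simp only [pT2_eq_fderiv (hd.of_uncurry _ x), pT2_eq_fderiv (hVd.of_uncurry u x)]
  exact hasDerivAt_fderiv_apply hY u x _

theorem hasDerivAt_pTh2 (hY : ContDiff ℝ 2 (uncurry Y)) (u : ℝ) (x : ℝ × ℝ) :
    HasDerivAt (fun s => pTh2 (Y s) x) (pTh2 (uDeriv Y u) x) u := by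
  have hd := hY.differentiable two_ne_zero
  have hVd := (hY.uncurry_uDeriv (m := 1) le_rfl).differentiable one_ne_zero
  simp only [pTh2_eq_fderiv (hd.of_uncurry _ x), pTh2_eq_fderiv (hVd.of_uncurry u x)]
  exact hasDerivAt_fderiv_apply hY u x _

theorem hasDerivAt_dirichletForm (hY : ContDiff ℝ 2 (uncurry Y)) (hZ : ContDiff ℝ 2 (uncurry Z))
    (u : ℝ) (x : ℝ × ℝ) :
    HasDerivAt (fun s => dirichletForm (Y s) (Z s) x)
      (dirichletForm (uDeriv Y u) (Z u) x + dirichletForm (Y u) (uDeriv Z u) x) u := by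
  refine (((hasDerivAt_pT2 hY u x).etaM (hasDerivAt_pT2 hZ u x)).add
    ((hasDerivAt_pTh2 hY u x).etaM (hasDerivAt_pTh2 hZ u x))).congr_deriv ?_
  simp only [dirichletForm]
  ring

end Dirichlet

section Integration

theorem hasDerivAt_setIntegral_of_deriv_eq_zero_off {α E : Type*} [TopologicalSpace α]
    [T2Space α] [SecondCountableTopology α] [MeasurableSpace α] [OpensMeasurableSpace α]
    [NormedAddCommGroup E] [NormedSpace ℝ E]
    {μ : Measure α} [IsFiniteMeasureOnCompacts μ] {U K : Set α} (hK : IsCompact K)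
    {G G' : ℝ → α → E} (hG : ∀ u x, HasDerivAt (G · x) (G' u x) u)
    (hGc : ∀ u, Continuous (G u)) (hG'c : Continuous (uncurry G'))
    (hG'K : ∀ u, ∀ x ∉ K, G' u x = 0) {u₀ : ℝ} (hGi : IntegrableOn (G u₀) U μ) :
    HasDerivAt (fun u => ∫ x in U, G u x ∂μ) (∫ x in U, G' u₀ x ∂μ) u₀ := by
  obtain ⟨C, hC⟩ := ((isCompact_closedBall u₀ 1).prod hK).exists_bound_of_continuousOn
    hG'c.continuousOn
  have hbound : ∀ x, ∀ u ∈ Metric.ball u₀ 1, ‖G' u x‖ ≤ K.indicator (fun _ => C) x := by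
    intro x u hu
    by_cases hx : x ∈ K
    · rw [indicator_of_mem hx]
      exact hC (u, x) ⟨Metric.ball_subset_closedBall hu, hx⟩
    · rw [indicator_of_notMem hx, hG'K u x hx, norm_zero]
  refine (hasDerivAt_integral_of_dominated_loc_of_deriv_le (Metric.ball_mem_nhds u₀ one_pos)
    (Eventually.of_forall fun u => (hGc u).aestronglyMeasurable) hGi
    (hG'c.comp (Continuous.prodMk_right u₀)).aestronglyMeasurable
    (Eventually.of_forall hbound) ?_ (Eventually.of_forall fun x u _ => hG u x)).2
  exact ((integrableOn_const hK.measure_ne_top).integrable_indicator hK.measurableSet).integrableOn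

theorem Continuous.integrableOn_of_isBounded {α E : Type*} [MetricSpace α] [ProperSpace α]
    [MeasurableSpace α] [OpensMeasurableSpace α] [NormedAddCommGroup E] {μ : Measure α}
    [IsFiniteMeasureOnCompacts μ] {F : α → E} (hF : Continuous F) {U : Set α}
    (hU : Bornology.IsBounded U) : IntegrableOn F U μ :=
  (hF.continuousOn.integrableOn_compact hU.isCompact_closure).mono_set subset_closure

theorem integrable_etaM_of_eq_zero_off {α : Type*} [TopologicalSpace α] [R1Space α]
    [MeasurableSpace α] [OpensMeasurableSpace α] {μ : Measure α} [IsFiniteMeasureOnCompacts μ]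
    {K : Set α} {f g : α → E5} (hf : Continuous f) (hg : Continuous g) (hK : IsCompact K)
    (hfK : ∀ x ∉ K, f x = 0) : Integrable (fun x => etaM (f x) (g x)) μ :=
  (hf.etaM hg).integrable_of_hasCompactSupport
    (HasCompactSupport.intro hK fun x hx => by simp [hfK x hx, etaM])

variable {f g : ℝ × ℝ → E5} {U K : Set (ℝ × ℝ)}

theorem integral_etaM_fderiv_eq_neg (hf : ContDiff ℝ 1 f) (hg : ContDiff ℝ 1 g)
    (hK : IsCompact K) (hfK : ∀ x ∉ K, f x = 0) (v : ℝ × ℝ) :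
    ∫ x, etaM (f x) (fderiv ℝ g x v) = -∫ x, etaM (fderiv ℝ f x v) (g x) := by
  have hf' : Continuous fun x => fderiv ℝ f x v :=
    (hf.continuous_fderiv one_ne_zero).clm_apply continuous_const
  have hg' : Continuous fun x => fderiv ℝ g x v :=
    (hg.continuous_fderiv one_ne_zero).clm_apply continuous_const
  have h := integral_bilinear_fderiv_right_eq_neg_left_of_integrable (μ := volume) (B := etaCLM)
    (f := f) (g := g) (v := v) ?_ ?_ ?_ (fun x _ => hf.differentiable one_ne_zero x)
    (fun x _ => hg.differentiable one_ne_zero x)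
  · simpa only [etaCLM_apply] using h
  · exact integrable_etaM_of_eq_zero_off hf' hg.continuous hK
      fun x hx => by rw [fderiv_eq_zero_of_notMem hK.isClosed hfK hx]; rfl
  · exact integrable_etaM_of_eq_zero_off hf.continuous hg' hK hfK
  · exact integrable_etaM_of_eq_zero_off hf.continuous hg.continuous hK hfK

theorem integral_dirichletForm_eq_neg_integral_etaM_lap2 {h : ℝ × ℝ → E5} (hf : ContDiff ℝ 1 f)
    (hh : ContDiff ℝ 2 h) (hK : IsCompact K) (hKU : K ⊆ U) (hfK : ∀ x ∉ K, f x = 0) :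
    ∫ x in U, dirichletForm f h x = -∫ x in U, etaM (f x) (lap2 h x) := by
  have hfd := hf.differentiable one_ne_zero
  have hhd := hh.differentiable two_ne_zero
  have hT : ContDiff ℝ 1 (pT2 h) := by
    rw [show pT2 h = fun x => fderiv ℝ h x (1, 0) from funext fun x => pT2_eq_fderiv (hhd x)]
    exact (hh.fderiv_right le_rfl).clm_apply contDiff_const
  have hTh : ContDiff ℝ 1 (pTh2 h) := by
    rw [show pTh2 h = fun x => fderiv ℝ h x (0, 1) from funext fun x => pTh2_eq_fderiv (hhd x)]
    exact (hh.fderiv_right le_rfl).clm_apply contDiff_const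
  have hlap : ∀ x, etaM (f x) (lap2 h x) =
      etaM (f x) (fderiv ℝ (pT2 h) x (1, 0)) + etaM (f x) (fderiv ℝ (pTh2 h) x (0, 1)) :=
    fun x => by rw [lap2, etaM_add_right, pT2_eq_fderiv (hT.differentiable one_ne_zero x),
      pTh2_eq_fderiv (hTh.differentiable one_ne_zero x)]
  have hdir : ∀ x, dirichletForm f h x =
      etaM (fderiv ℝ f x (1, 0)) (pT2 h x) + etaM (fderiv ℝ f x (0, 1)) (pTh2 h x) :=
    fun x => by rw [dirichletForm, pT2_eq_fderiv (hfd x), pTh2_eq_fderiv (hfd x)]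
  have hf'K : ∀ v, ∀ x ∉ K, fderiv ℝ f x v = 0 := fun v x hx => by
    rw [fderiv_eq_zero_of_notMem hK.isClosed hfK hx]; rfl
  have hd' : ∀ {d : ℝ × ℝ → E5}, ContDiff ℝ 1 d → ∀ v, Continuous fun x => fderiv ℝ d x v :=
    fun hd v => (hd.continuous_fderiv one_ne_zero).clm_apply continuous_const
  rw [setIntegral_eq_integral_of_forall_compl_eq_zero fun x hx =>
      dirichletForm_eq_zero_of_notMem hK.isClosed hfd hfK fun hxK => hx (hKU hxK),
    setIntegral_eq_integral_of_forall_compl_eq_zero fun x hx => by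
      simp [hfK x fun hxK => hx (hKU hxK), etaM],
    funext hdir, funext hlap,
    integral_add (integrable_etaM_of_eq_zero_off (hd' hf _) hT.continuous hK (hf'K _))
      (integrable_etaM_of_eq_zero_off (hd' hf _) hTh.continuous hK (hf'K _)),
    integral_add (integrable_etaM_of_eq_zero_off hf.continuous (hd' hT _) hK hfK)
      (integrable_etaM_of_eq_zero_off hf.continuous (hd' hTh _) hK hfK),
    integral_etaM_fderiv_eq_neg hf hT hK hfK, integral_etaM_fderiv_eq_neg hf hTh hK hfK,
    neg_add, neg_neg, neg_neg]

end Integration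

section Variation

variable {U K : Set (ℝ × ℝ)}

theorem hasDerivAt_integral_dirichletForm (hU : Bornology.IsBounded U) (hK : IsCompact K)
    {Y Z : ℝ → ℝ × ℝ → E5} (hY : ContDiff ℝ 2 (uncurry Y)) (hZ : ContDiff ℝ 2 (uncurry Z))
    (hYK : ∀ u, ∀ x ∉ K, uDeriv Y u x = 0) (hZK : ∀ u, ∀ x ∉ K, uDeriv Z u x = 0) (u₀ : ℝ) :
    HasDerivAt (fun u => ∫ x in U, dirichletForm (Y u) (Z u) x)
      (∫ x in U, (dirichletForm (uDeriv Y u₀) (Z u₀) x + dirichletForm (Y u₀) (uDeriv Z u₀) x))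
      u₀ := by
  have hY' : ContDiff ℝ 1 (uncurry (uDeriv Y)) := hY.uncurry_uDeriv le_rfl
  have hZ' : ContDiff ℝ 1 (uncurry (uDeriv Z)) := hZ.uncurry_uDeriv le_rfl
  have hc := continuous_uncurry_dirichletForm (hY.of_le one_le_two) (hZ.of_le one_le_two)
  refine hasDerivAt_setIntegral_of_deriv_eq_zero_off hK (hasDerivAt_dirichletForm hY hZ)
    (fun u => hc.comp (Continuous.prodMk_right u))
    ((continuous_uncurry_dirichletForm hY' (hZ.of_le one_le_two)).add
      (continuous_uncurry_dirichletForm (hY.of_le one_le_two) hZ'))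
    (fun u x hx => ?_) ((hc.comp (Continuous.prodMk_right u₀)).integrableOn_of_isBounded hU)
  rw [dirichletForm_comm (Y u), dirichletForm_eq_zero_of_notMem hK.isClosed
      ((hY'.differentiable one_ne_zero).of_uncurry u) (hYK u) hx,
    dirichletForm_eq_zero_of_notMem hK.isClosed
      ((hZ'.differentiable one_ne_zero).of_uncurry u) (hZK u) hx, add_zero]

theorem deriv_half_integral_gradSqEta2 (hU : Bornology.IsBounded U) (hK : IsCompact K)
    {Y : ℝ → ℝ × ℝ → E5} (hY : ContDiff ℝ 2 (uncurry Y))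
    (hYK : ∀ u, ∀ x ∉ K, uDeriv Y u x = 0) :
    deriv (fun u => (1 / 2) * ∫ x in U, gradSqEta2 (Y u) x) =
      fun u => ∫ x in U, dirichletForm (uDeriv Y u) (Y u) x := funext fun u => by
  refine ((hasDerivAt_integral_dirichletForm hU hK hY hY hYK hYK u).const_mul
    (1 / 2)).deriv.trans ?_
  simp only [dirichletForm_comm (Y u), ← two_mul, integral_const_mul]
  ring

theorem integral_dirichletForm_add_eq_of_harmonic (hUo : IsOpen U) (hUb : Bornology.IsBounded U)
    (hK : IsCompact K) (hKU : K ⊆ U) {w v h : ℝ × ℝ → E5} (hw : ContDiff ℝ 1 w)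
    (hv : ContDiff ℝ 1 v) (hh : ContDiff ℝ 2 h) (hwK : ∀ x ∉ K, w x = 0)
    (hwh : ∀ x, etaM (w x) (h x) = -etaM (v x) (v x))
    (hharm : ∀ x ∈ U, lap2 h x = -(gradSqEta2 h x) • h x) :
    ∫ x in U, (dirichletForm w h x + dirichletForm v v x) =
      ∫ x in U, (dirichletForm v v x - etaM (v x) (v x) * gradSqEta2 h x) := by
  have hlap : ∀ x ∈ U, etaM (w x) (lap2 h x) = etaM (v x) (v x) * gradSqEta2 h x :=
    fun x hx => by rw [hharm x hx, etaM_smul_right, hwh]; ring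
  have hh1 : ContDiff ℝ 1 h := hh.of_le one_le_two
  have hvv := (hv.continuous_dirichletForm hv).integrableOn_of_isBounded (μ := volume) hUb
  rw [integral_add ((hw.continuous_dirichletForm hh1).integrableOn_of_isBounded hUb) hvv,
    integral_dirichletForm_eq_neg_integral_etaM_lap2 hw hh hK hKU hwK,
    setIntegral_congr_fun hUo.measurableSet hlap, integral_sub hvv, neg_add_eq_sub]
  exact ((hv.continuous.etaM hv.continuous).mul
    (hh1.continuous_dirichletForm hh1)).integrableOn_of_isBounded hUb

end Variation

/-- Second variation formula for the Dirichlet energy of a map into de Sitter space: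
for a variation `Y_u` of a harmonic map `Y_0`, supported in a compact `K ⊂ U`, the
Dirichlet energy `D(u)` is twice differentiable at `0` with
`D''(0) = ∫_U (η(∂_tV,∂_tV) + η(∂_θV,∂_θV) − η(V,V)|∇Y_0|²_η)` where `V = ∂_uY(0,·)`. -/
theorem stmt17 (U : Set (ℝ × ℝ)) (hUopen : IsOpen U) (hUbdd : Bornology.IsBounded U)
    (K : Set (ℝ × ℝ)) (hK : IsCompact K) (hKU : K ⊆ U)
    (Y : ℝ → ℝ × ℝ → E5)
    (hsm : ContDiff ℝ (⊤ : ℕ∞) (fun p : ℝ × (ℝ × ℝ) => Y p.1 p.2))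
    (hsph : ∀ u : ℝ, ∀ x : ℝ × ℝ, etaM (Y u x) (Y u x) = 1)
    (hsupp : ∀ u : ℝ, ∀ x ∉ K, Y u x = Y 0 x)
    (hharm : ∀ x ∈ U, lap2 (Y 0) x = -(gradSqEta2 (Y 0) x) • Y 0 x) :
    let V : ℝ × ℝ → E5 := fun x => deriv (fun u => Y u x) 0
    let D : ℝ → ℝ := fun u =>
      (1 / 2) * ∫ x in U, (etaM (pT2 (Y u) x) (pT2 (Y u) x) + etaM (pTh2 (Y u) x) (pTh2 (Y u) x))
    DifferentiableAt ℝ (deriv D) 0 ∧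
      deriv (deriv D) 0 =
        ∫ x in U, (etaM (pT2 V x) (pT2 V x) + etaM (pTh2 V x) (pTh2 V x)
          - etaM (V x) (V x) * gradSqEta2 (Y 0) x) := by
  intro V D
  have hY : ContDiff ℝ 3 (uncurry Y) := hsm.of_le (WithTop.coe_le_coe.2 le_top)
  have hY2 : ContDiff ℝ 2 (uncurry Y) := hY.of_le (by norm_num)
  have hV : ContDiff ℝ 2 (uncurry (uDeriv Y)) := hY.uncurry_uDeriv (by norm_num)
  have hW : ContDiff ℝ 1 (uncurry (uDeriv (uDeriv Y))) := hV.uncurry_uDeriv le_rfl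
  have hVK : ∀ u, ∀ x ∉ K, uDeriv Y u x = 0 := fun u x hx =>
    uDeriv_eq_zero fun s => hsupp s x hx
  have hWK : ∀ u, ∀ x ∉ K, uDeriv (uDeriv Y) u x = 0 := fun u x hx =>
    uDeriv_eq_zero fun s => hVK s x hx
  have hD'' := hasDerivAt_integral_dirichletForm hUbdd hK hV hY2 hWK hVK 0
  rw [← deriv_half_integral_gradSqEta2 hUbdd hK hY2 hVK] at hD''
  exact ⟨hD''.differentiableAt, hD''.deriv.trans <|
    integral_dirichletForm_add_eq_of_harmonic hUopen hUbdd hK hKU (hW.of_uncurry 0)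
      ((hV.of_le one_le_two).of_uncurry 0) (hY2.of_uncurry 0) (hWK 0)
      (etaM_uDeriv_uDeriv_self hY2 hsph 0) hharm⟩
end
end
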